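/- arXiv:1009.3435 — 2 statements merged into one kernel-verified Lean document; each statement's English description precedes it below -/
import Mathlib

section
/- A matroid M is a fundamental transversal matroid if and only if Σ_{Y∈F} β(Y) = r(M) − r(⋂F) for every filter F in the lattice of cyclic flats of M, where β(X) = r(M) − r(X) − Σ_{Y cyclic flat, X ⊊ Y} β(Y) (with the convention that the intersection over the empty filter is E(M)). -/
open Matroid Set

variable {α : Type*}

/-- An element that lies in every base of `M`; a coloop. -/
def MCoPaper.Coloop (M : Matroid α) (e : α) : Prop := ∀ B, M.IsBase B → e ∈ B

/-- A circuit: a minimal dependent subset of the ground set. -/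
def MCoPaper.Circuit (M : Matroid α) (C : Set α) : Prop :=
  C ⊆ M.E ∧ ¬ M.Indep C ∧ ∀ x ∈ C, M.Indep (C \ {x})

/-- A cyclic flat: a flat whose restriction has no coloops. -/
def MCoPaper.CyclicFlat (M : Matroid α) (F : Set α) : Prop :=
  M.IsFlat F ∧ ∀ e ∈ F, ¬ MCoPaper.Coloop (M ↾ F) e

/-- The rank of a set: the largest cardinality of an independent subset. -/
noncomputable def MCoPaper.rk (M : Matroid α) (X : Set α) : ℕ :=
  sSup {n | ∃ I, M.Indep I ∧ I ⊆ X ∧ I.ncard = n}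

open MCoPaper Classical in
/-- Mason's β function. -/
noncomputable def MCoPaper.beta [Fintype α] (M : Matroid α) (X : Finset α) : ℤ :=
  (rk M M.E : ℤ) - rk M ↑X -
    ∑ Y ∈ (Finset.univ.filter (fun Y : Finset α => CyclicFlat M ↑Y ∧ X ⊂ Y)).attach,
      MCoPaper.beta M Y.1
  termination_by (Fintype.card α - X.card : ℕ)
  decreasing_by
    have hY := Y.2
    simp only [Finset.mem_filter, Finset.mem_univ, true_and] at hY
    have h1 : X.card < Y.1.card := Finset.card_lt_card hY.2
    have h2 : Y.1.card ≤ Fintype.card α := Y.1.card_le_univ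
    omega

open MCoPaper Classical in
/-- Mason's α function. -/
noncomputable def MCoPaper.alpha [Fintype α] (M : Matroid α) (X : Finset α) : ℤ :=
  ((X.card : ℤ) - rk M ↑X) -
    ∑ F ∈ (Finset.univ.filter (fun F : Finset α => M.IsFlat ↑F ∧ F ⊂ X)).attach,
      MCoPaper.alpha M F.1
  termination_by X.card
  decreasing_by
    have hF := F.2
    simp only [Finset.mem_filter, Finset.mem_univ, true_and] at hF
    exact Finset.card_lt_card hF.2

/-- `A : Fin n → Set α` is a presentation of `M`. -/
def MCoPaper.IsPresentation (M : Matroid α) {n : ℕ} (A : Fin n → Set α) : Prop :=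
  (∀ i, A i ⊆ M.E) ∧
    ∀ I : Set α, M.Indep I ↔ ∃ φ : α → Fin n, Set.InjOn φ I ∧ ∀ x ∈ I, x ∈ A (φ x)

/-- `M` is a transversal matroid. -/
def MCoPaper.Transversal (M : Matroid α) : Prop :=
  ∃ (n : ℕ) (A : Fin n → Set α), MCoPaper.IsPresentation M A

/-- `B` is a fundamental basis of `M`. -/
def MCoPaper.FundBasis (M : Matroid α) (B : Set α) : Prop :=
  M.IsBase B ∧ ∀ F, MCoPaper.CyclicFlat M F → F ⊆ M.closure (B ∩ F)

/-- `M` is a fundamental transversal matroid. -/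
def MCoPaper.FundTransversal (M : Matroid α) : Prop :=
  ∃ B, MCoPaper.FundBasis M B

open MCoPaper

/-!
If `B` is a fundamental basis, then every `b ∈ B` has a largest cyclic flat avoiding it, the
closure of all cyclic flats avoiding `b`, and a cyclic flat `Y` avoids `b` iff it lies below that
flat. Hence the sum of `β` over the cyclic flats containing `Y` is `|B \ Y| = r(M) - r(Y)`, so
`β(Y)` counts the `b` whose largest avoiding cyclic flat is `Y`, and the sum of `β` over a filter
`F` counts the elements of `B` outside `⋂ F`. This is `r(M) - r(⋂ F)`, because the sets `X` with
`r(X) = |B ∩ X|` are closed under intersection by submodularity.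

Conversely, the identity for a filter `K` and for `K ∪ {Y}` gives
`β(Y) = r(⋂ K) - r(⋂ K ∩ Y)`; in particular `β ≥ 0`. Removing cyclic flats from the filter of
all cyclic flats one at a time, minimal ones first, each step from `K ∪ {Y}` to `K` extends a
basis of `⋂ K ∩ Y` to a basis of `⋂ K` by `β(Y)` elements lying in every cyclic flat not
contained in `Y`. Enough such elements exist because `Y` and the intersection `D` of those cyclic
flats form a modular pair up to `β`: a circuit in `Y ∪ D` leaving `Y` spans with `Y` a larger
cyclic flat, whose rank is bounded below using `β ≥ 0`. The final basis meets each cyclic flat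
`F` in at least `∑_{Z ⊉ F} β(Z) = r(F)` elements, so it is fundamental.
-/

open scoped Classical

namespace MCoPaper

section Rank

variable {M : Matroid α} [M.RankFinite] {B I X Y : Set α}

lemma cast_rk (X : Set α) : (rk M X : ℕ∞) = M.eRk X := by
  obtain ⟨I, hI⟩ := M.exists_isBasis' X
  have hIfin : I.Finite := hI.indep.finite
  suffices hrk : rk M X = I.ncard by rw [hrk, hIfin.cast_ncard_eq, hI.encard_eq_eRk]
  refine IsGreatest.csSup_eq ⟨⟨I, hI.indep, hI.subset, rfl⟩, ?_⟩
  rintro _ ⟨J, hJ, hJX, rfl⟩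
  have hJI : J.encard ≤ I.encard := hI.encard_eq_eRk ▸ hJ.encard_le_eRk_of_subset hJX
  rwa [← hIfin.cast_ncard_eq, ← hJ.finite.cast_ncard_eq, Nat.cast_le] at hJI

lemma rk_le_rk_iff : rk M X ≤ rk M Y ↔ M.eRk X ≤ M.eRk Y := by
  rw [← cast_rk, ← cast_rk, Nat.cast_le]

lemma rk_mono (hXY : X ⊆ Y) : rk M X ≤ rk M Y :=
  rk_le_rk_iff.2 (M.eRk_mono hXY)

lemma rk_inter_add_rk_union_le (X Y : Set α) :
    rk M (X ∩ Y) + rk M (X ∪ Y) ≤ rk M X + rk M Y := by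
  have h := M.eRk_inter_add_eRk_union_le X Y
  rw [← cast_rk, ← cast_rk, ← cast_rk, ← cast_rk] at h
  exact_mod_cast h

lemma rk_eq_ncard_of_isBasis' (hI : M.IsBasis' I X) : rk M X = I.ncard := by
  have h := hI.eRk_eq_encard
  rw [← cast_rk, ← hI.indep.finite.cast_ncard_eq] at h
  exact_mod_cast h

lemma rk_eq_ncard_of_indep (hI : M.Indep I) : rk M I = I.ncard :=
  rk_eq_ncard_of_isBasis' hI.isBasis_self.isBasis'

lemma ncard_le_rk_of_indep (hI : M.Indep I) (hIX : I ⊆ X) : I.ncard ≤ rk M X :=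
  rk_eq_ncard_of_indep hI ▸ rk_mono hIX

lemma rk_closure_eq (X : Set α) : rk M (M.closure X) = rk M X :=
  le_antisymm (rk_le_rk_iff.2 (M.eRk_closure_eq X).le) (rk_le_rk_iff.2 (M.eRk_closure_eq X).ge)

lemma rk_le_of_subset_closure (hXY : X ⊆ M.closure Y) : rk M X ≤ rk M Y :=
  rk_closure_eq (M := M) Y ▸ rk_mono hXY

lemma subset_closure_of_rk_le (hXY : X ⊆ Y) (hY : Y ⊆ M.E) (h : rk M Y ≤ rk M X) :
    Y ⊆ M.closure X := by
  rw [(M.isRkFinite_set X).closure_eq_closure_of_subset_of_eRk_ge_eRk hXY (rk_le_rk_iff.1 h)]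
  exact M.subset_closure Y hY

lemma rk_add_rk_le_of_forall_isCircuit (h : ∀ C, M.IsCircuit C → C ⊆ X ∪ Y → C ⊆ X) :
    rk M X + rk M Y ≤ rk M (X ∪ Y) + rk M (X ∩ Y) := by
  obtain ⟨I₀, hI₀⟩ := M.exists_isBasis' (X ∩ Y)
  obtain ⟨IX, hIX, h₀X⟩ :=
    hI₀.indep.subset_isBasis'_of_subset (hI₀.subset.trans inter_subset_left)
  obtain ⟨IY, hIY, h₀Y⟩ :=
    hI₀.indep.subset_isBasis'_of_subset (hI₀.subset.trans inter_subset_right)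
  have hsub : IX ∪ IY ⊆ X ∪ Y := union_subset_union hIX.subset hIY.subset
  have hindep : M.Indep (IX ∪ IY) := by
    by_contra hdep
    obtain ⟨C, hCI, hC⟩ := ((M.not_indep_iff (union_subset hIX.indep.subset_ground
      hIY.indep.subset_ground)).1 hdep).exists_isCircuit_subset
    obtain ⟨c, hcC, hcIX⟩ := not_subset.1 fun hCX => hC.not_indep (hIX.indep.subset hCX)
    have hcIY : c ∈ IY := (hCI hcC).resolve_left hcIX
    -- `c ∈ X ∩ Y` is spanned by `I₀ ⊆ IY \ {c}`
    have hcXY : c ∈ X ∩ Y := ⟨h C hC (hCI.trans hsub) hcC, hIY.subset hcIY⟩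
    refine hIY.indep.notMem_closure_sdiff_of_mem hcIY (M.closure_subset_closure (X := I₀) ?_ ?_)
    · exact subset_sdiff_singleton h₀Y fun hc => hcIX (h₀X hc)
    · rw [hI₀.closure_eq_closure]
      exact M.mem_closure_of_mem' hcXY (hIY.indep.subset_ground hcIY)
  have h₁ := ncard_le_rk_of_indep hindep hsub
  have h₂ := ncard_le_rk_of_indep (hIX.indep.subset inter_subset_left)
    (inter_subset_inter hIX.subset hIY.subset)
  have h₃ := ncard_union_add_ncard_inter IX IY hIX.indep.finite hIY.indep.finite
  rw [rk_eq_ncard_of_isBasis' hIX, rk_eq_ncard_of_isBasis' hIY]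
  omega

lemma rk_inter_eq_ncard_of_indep (hB : M.Indep B) (hX : rk M X = (B ∩ X).ncard)
    (hY : rk M Y = (B ∩ Y).ncard) : rk M (X ∩ Y) = (B ∩ (X ∩ Y)).ncard := by
  have hsub := rk_inter_add_rk_union_le (M := M) X Y
  have hunion := ncard_le_rk_of_indep (hB.subset inter_subset_left)
    (inter_subset_right : B ∩ (X ∪ Y) ⊆ X ∪ Y)
  have hinter := ncard_le_rk_of_indep (hB.subset inter_subset_left)
    (inter_subset_right : B ∩ (X ∩ Y) ⊆ X ∩ Y)
  have hcard := ncard_union_add_ncard_inter (B ∩ X) (B ∩ Y)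
    (hB.finite.subset inter_subset_left) (hB.finite.subset inter_subset_left)
  rw [← inter_union_distrib_left, ← inter_inter_distrib_left] at hcard
  omega

end Rank

section Cyclic

variable {M : Matroid α} {F X Y C : Set α}

/-- For `X ⊆ M.E` this says that `X` is a union of circuits. -/
def Cyclic (M : Matroid α) (X : Set α) : Prop := ∀ e ∈ X, e ∈ M.closure (X \ {e})

lemma cyclicFlat_iff : CyclicFlat M F ↔ M.IsFlat F ∧ Cyclic M F := by
  refine and_congr_right fun hF => forall₂_congr fun e he => ?_
  rw [Coloop, ← isColoop_iff_forall_mem_isBase,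
    isColoop_iff_notMem_closure_compl (by exact he), restrict_ground_eq,
    restrict_closure_eq _ sdiff_subset hF.subset_ground, not_not]
  exact ⟨fun h => h.1, fun h => ⟨h, he⟩⟩

lemma CyclicFlat.cyclic (hF : CyclicFlat M F) : Cyclic M F :=
  (cyclicFlat_iff.1 hF).2

lemma Cyclic.sUnion {S : Set (Set α)} (hS : ∀ X ∈ S, Cyclic M X) : Cyclic M (⋃₀ S) := by
  rintro e ⟨X, hXS, heX⟩
  exact M.closure_subset_closure (sdiff_subset_sdiff_left (subset_sUnion_of_mem hXS))
    (hS X hXS e heX)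

lemma Cyclic.union (hX : Cyclic M X) (hY : Cyclic M Y) : Cyclic M (X ∪ Y) := by
  rw [← sUnion_pair]
  exact Cyclic.sUnion (by rintro Z (rfl | rfl) <;> assumption)

lemma cyclic_of_isCircuit (hC : M.IsCircuit C) : Cyclic M C :=
  fun _ => hC.mem_closure_sdiff_singleton_of_mem

lemma Cyclic.cyclicFlat_closure (hX : Cyclic M X) (hXE : X ⊆ M.E) :
    CyclicFlat M (M.closure X) := by
  refine cyclicFlat_iff.2 ⟨M.isFlat_closure X, fun e he => ?_⟩
  by_cases heX : e ∈ X
  · exact M.closure_subset_closure (sdiff_subset_sdiff_left (M.subset_closure X hXE))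
      (hX e heX)
  · have hX' : X ⊆ M.closure X \ {e} := fun x hx =>
      ⟨M.subset_closure X hXE hx, fun hxe => heX (hxe ▸ hx)⟩
    exact M.closure_subset_closure hX' he

lemma cyclicFlat_closure_empty (M : Matroid α) : CyclicFlat M (M.closure ∅) :=
  Cyclic.cyclicFlat_closure (fun _ he => he.elim) (empty_subset _)

end Cyclic

section Filters

variable {M : Matroid α} {K : Finset (Finset α)} {Y Z : Finset α}

def meet (M : Matroid α) (K : Finset (Finset α)) : Set α := M.E ∩ ⋂ Y ∈ K, (↑Y : Set α)

lemma meet_subset_ground : meet M K ⊆ M.E := inter_subset_left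

lemma meet_subset_of_mem (hY : Y ∈ K) : meet M K ⊆ ↑Y :=
  inter_subset_right.trans (biInter_subset_of_mem hY)

lemma meet_anti {K' : Finset (Finset α)} (h : K ⊆ K') : meet M K' ⊆ meet M K :=
  inter_subset_inter_right _ (biInter_subset_biInter_left fun _ hY => h hY)

@[simp] lemma meet_empty : meet M ∅ = M.E := by simp [meet]

lemma meet_insert : meet M (insert Y K) = meet M K ∩ ↑Y := by
  ext x; simp only [meet, Finset.mem_insert, iInter_iInter_eq_or_left, mem_inter_iff]; tauto

def IsCyclicFilter (M : Matroid α) (K : Finset (Finset α)) : Prop :=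
  (∀ Y ∈ K, CyclicFlat M ↑Y) ∧ ∀ A ∈ K, ∀ B : Finset α, CyclicFlat M ↑B → A ⊆ B → B ∈ K

lemma IsCyclicFilter.insert (hK : IsCyclicFilter M K) (hY : CyclicFlat M ↑Y)
    (hYK : ∀ Z : Finset α, CyclicFlat M ↑Z → Y ⊂ Z → Z ∈ K) :
    IsCyclicFilter M (insert Y K) := by
  refine ⟨fun Z hZ => ?_, fun A hA B hB hAB => ?_⟩
  · obtain rfl | hZ := Finset.mem_insert.1 hZ
    exacts [hY, hK.1 Z hZ]
  obtain rfl | hA := Finset.mem_insert.1 hA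
  · obtain rfl | hne := eq_or_ne A B
    · exact Finset.mem_insert_self _ _
    · exact Finset.mem_insert_of_mem (hYK B hB (hAB.ssubset_of_ne hne))
  · exact Finset.mem_insert_of_mem (hK.2 A hA B hB hAB)

lemma IsCyclicFilter.not_subset_of_notMem (hK : IsCyclicFilter M K) (hY : CyclicFlat M ↑Y)
    (hYK : Y ∉ K) (hZ : Z ∈ K) : ¬ Z ⊆ Y :=
  fun hZY => hYK (hK.2 Z hZ Y hY hZY)

variable [Fintype α]

noncomputable def cyclicFlats (M : Matroid α) : Finset (Finset α) :=
  Finset.univ.filter fun Y => CyclicFlat M ↑Y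

@[simp] lemma mem_cyclicFlats : Y ∈ cyclicFlats M ↔ CyclicFlat M ↑Y := by
  simp [cyclicFlats]

lemma meet_cyclicFlats_subset_closure_empty : meet M (cyclicFlats M) ⊆ M.closure ∅ := by
  obtain ⟨L, hL⟩ := (toFinite (M.closure ∅)).exists_finset_coe
  exact hL ▸ meet_subset_of_mem (mem_cyclicFlats.2 (hL ▸ cyclicFlat_closure_empty M))

lemma IsCyclicFilter.subset_cyclicFlats (hK : IsCyclicFilter M K) : K ⊆ cyclicFlats M :=
  fun Y hY => mem_cyclicFlats.2 (hK.1 Y hY)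

lemma isCyclicFilter_cyclicFlats (M : Matroid α) : IsCyclicFilter M (cyclicFlats M) :=
  ⟨fun _ => mem_cyclicFlats.1, fun _ _ _ hB _ => mem_cyclicFlats.2 hB⟩

lemma isCyclicFilter_ssuperset (M : Matroid α) (Y : Finset α) :
    IsCyclicFilter M ((cyclicFlats M).filter (Y ⊂ ·)) := by
  refine ⟨fun Z hZ => mem_cyclicFlats.1 (Finset.mem_filter.1 hZ).1, fun A hA B hB hAB => ?_⟩
  rw [Finset.mem_filter] at hA ⊢
  exact ⟨mem_cyclicFlats.2 hB, hA.2.trans_subset hAB⟩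

lemma isCyclicFilter_superset (M : Matroid α) (Y : Finset α) :
    IsCyclicFilter M ((cyclicFlats M).filter (Y ⊆ ·)) := by
  refine ⟨fun Z hZ => mem_cyclicFlats.1 (Finset.mem_filter.1 hZ).1, fun A hA B hB hAB => ?_⟩
  rw [Finset.mem_filter] at hA ⊢
  exact ⟨mem_cyclicFlats.2 hB, hA.2.trans hAB⟩

lemma isCyclicFilter_not_subset (M : Matroid α) (Y : Finset α) :
    IsCyclicFilter M ((cyclicFlats M).filter (¬ · ⊆ Y)) := by
  refine ⟨fun Z hZ => mem_cyclicFlats.1 (Finset.mem_filter.1 hZ).1, fun A hA B hB hAB => ?_⟩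
  rw [Finset.mem_filter] at hA ⊢
  exact ⟨mem_cyclicFlats.2 hB, fun hBY => hA.2 (hAB.trans hBY)⟩

lemma IsCyclicFilter.meet_filter_not_subset_subset (hK : IsCyclicFilter M K)
    (hY : CyclicFlat M ↑Y) (hYK : Y ∉ K) :
    meet M ((cyclicFlats M).filter (¬ · ⊆ Y)) ⊆ meet M K :=
  meet_anti fun _ hZ =>
    Finset.mem_filter.2 ⟨hK.subset_cyclicFlats hZ, hK.not_subset_of_notMem hY hYK hZ⟩

lemma meet_filter_superset (hY : CyclicFlat M ↑Y) :
    meet M ((cyclicFlats M).filter (Y ⊆ ·)) = ↑Y := by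
  refine (meet_subset_of_mem (Finset.mem_filter.2 ⟨mem_cyclicFlats.2 hY, subset_rfl⟩)).antisymm
    fun x hx => ⟨hY.1.subset_ground hx, mem_iInter₂.2 fun _ hZ => (Finset.mem_filter.1 hZ).2 hx⟩

end Filters

section Beta

variable [Fintype α] {M : Matroid α} {K : Finset (Finset α)} {Y Z F : Finset α}

lemma beta_def (M : Matroid α) (X : Finset α) :
    beta M X = rk M M.E - rk M ↑X - ∑ Y ∈ (cyclicFlats M).filter (X ⊂ ·), beta M Y := by
  rw [beta, Finset.sum_attach, cyclicFlats, Finset.filter_filter]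

lemma filter_superset_eq_insert (hY : CyclicFlat M ↑Y) :
    (cyclicFlats M).filter (Y ⊆ ·) = insert Y ((cyclicFlats M).filter (Y ⊂ ·)) := by
  ext Z
  simp only [Finset.mem_filter, Finset.mem_insert, mem_cyclicFlats, Finset.ssubset_iff_subset_ne]
  constructor
  · rintro ⟨hZ, hYZ⟩
    obtain rfl | hne := eq_or_ne Y Z
    exacts [Or.inl rfl, Or.inr ⟨hZ, hYZ, hne⟩]
  · rintro (rfl | ⟨hZ, hYZ, -⟩)
    exacts [⟨hY, subset_rfl⟩, ⟨hZ, hYZ⟩]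

lemma sum_beta_filter_superset (hY : CyclicFlat M ↑Y) :
    ∑ Z ∈ (cyclicFlats M).filter (Y ⊆ ·), beta M Z = rk M M.E - rk M ↑Y := by
  rw [filter_superset_eq_insert hY, Finset.sum_insert (by simp), beta_def]
  ring

lemma eq_beta_of_sum_filter_superset (g : Finset α → ℤ)
    (hg : ∀ Y ∈ cyclicFlats M, ∑ Z ∈ (cyclicFlats M).filter (Y ⊆ ·), g Z = rk M M.E - rk M ↑Y)
    (hY : Y ∈ cyclicFlats M) : g Y = beta M Y := by
  induction Y using WellFoundedGT.induction with
  | _ Y ih =>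
    have h := hg Y hY
    rw [filter_superset_eq_insert (mem_cyclicFlats.1 hY), Finset.sum_insert (by simp),
      Finset.sum_congr rfl fun Z hZ => ih Z (Finset.mem_filter.1 hZ).2 (Finset.mem_filter.1 hZ).1]
      at h
    rw [beta_def]
    linarith

def FilterBetaIdentity (M : Matroid α) : Prop :=
  ∀ K, IsCyclicFilter M K → ∑ Y ∈ K, beta M Y = rk M M.E - rk M (meet M K)

namespace FilterBetaIdentity

lemma beta_eq_rk_sub_rk (hH : FilterBetaIdentity M) (hK : IsCyclicFilter M K)
    (hY : CyclicFlat M ↑Y) (hYK : Y ∉ K) (hup : ∀ Z : Finset α, CyclicFlat M ↑Z → Y ⊂ Z → Z ∈ K) :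
    beta M Y = rk M (meet M K) - rk M (meet M K ∩ ↑Y) := by
  have hK' := hH _ (hK.insert hY hup)
  rw [Finset.sum_insert hYK, meet_insert, hH K hK] at hK'
  linarith

lemma beta_nonneg (hH : FilterBetaIdentity M) (hY : CyclicFlat M ↑Y) : 0 ≤ beta M Y := by
  rw [hH.beta_eq_rk_sub_rk (isCyclicFilter_ssuperset M Y) hY (by simp)
    fun Z hZ hYZ => by simp [hZ, hYZ], sub_nonneg, Nat.cast_le]
  exact rk_mono inter_subset_left

lemma rk_add_beta_le (hH : FilterBetaIdentity M) (hY : CyclicFlat M ↑Y) (hZ : CyclicFlat M ↑Z)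
    (hYZ : Y ⊂ Z) :
    rk M ↑Y + beta M Y ≤ rk M ↑Z := by
  have hsub : (cyclicFlats M).filter (Z ⊆ ·) ⊆ (cyclicFlats M).filter (Y ⊂ ·) :=
    fun W hW => by
      rw [Finset.mem_filter] at hW ⊢
      exact ⟨hW.1, hYZ.trans_subset hW.2⟩
  have hle := Finset.sum_le_sum_of_subset_of_nonneg hsub
    fun W hW _ => hH.beta_nonneg (mem_cyclicFlats.1 (Finset.mem_filter.1 hW).1)
  have hY' := sum_beta_filter_superset hY
  rw [sum_beta_filter_superset hZ] at hle
  rw [filter_superset_eq_insert hY, Finset.sum_insert (by simp)] at hY'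
  linarith

lemma rk_add_beta_le_rk_union (hH : FilterBetaIdentity M) (hY : CyclicFlat M ↑Y) :
    rk M ↑Y + beta M Y ≤ rk M (↑Y ∪ meet M ((cyclicFlats M).filter (¬ · ⊆ Y))) := by
  set D := meet M ((cyclicFlats M).filter (¬ · ⊆ Y))
  by_cases hcirc : ∀ C, M.IsCircuit C → C ⊆ ↑Y ∪ D → C ⊆ ↑Y
  · have hβ := hH.beta_eq_rk_sub_rk (isCyclicFilter_not_subset M Y) hY (by simp)
      fun Z hZ hYZ => by simp [hZ, hYZ.not_subset]
    have hmod := rk_add_rk_le_of_forall_isCircuit hcirc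
    rw [inter_comm] at hmod
    rw [hβ]
    linarith [(Nat.cast_le (α := ℤ)).2 hmod]
  -- otherwise a circuit leaving `Y` spans, together with `Y`, a strictly larger cyclic flat
  push Not at hcirc
  obtain ⟨C, hC, hCYD, hCY⟩ := hcirc
  have hYC : ↑Y ∪ C ⊆ M.E := union_subset hY.1.subset_ground hC.subset_ground
  obtain ⟨Z, hZ⟩ := (toFinite (M.closure (↑Y ∪ C))).exists_finset_coe
  have hZc : CyclicFlat M ↑Z :=
    hZ ▸ (hY.cyclic.union (cyclic_of_isCircuit hC)).cyclicFlat_closure hYC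
  have hYZ : Y ⊂ Z := by
    rw [← Finset.coe_ssubset, hZ]
    refine ssubset_of_subset_not_subset (subset_union_left.trans (M.subset_closure _ hYC))
      fun hZY => hCY (subset_union_right.trans ((M.subset_closure _ hYC).trans hZY))
  have hZrk : rk M ↑Z ≤ rk M (↑Y ∪ D) := by
    rw [hZ, rk_closure_eq]
    exact rk_mono (union_subset subset_union_left hCYD)
  linarith [hH.rk_add_beta_le hY hZc hYZ, (Nat.cast_le (α := ℤ)).2 hZrk]

lemma rk_meet_le_rk_union (hH : FilterBetaIdentity M) (hK : IsCyclicFilter M K)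
    (hY : CyclicFlat M ↑Y) (hYK : Y ∉ K)
    (hup : ∀ Z : Finset α, CyclicFlat M ↑Z → Y ⊂ Z → Z ∈ K) :
    rk M (meet M K) ≤ rk M (meet M K ∩ ↑Y ∪ meet M ((cyclicFlats M).filter (¬ · ⊆ Y))) := by
  have hβ := hH.beta_eq_rk_sub_rk hK hY hYK hup
  have hstar := hH.rk_add_beta_le_rk_union hY
  set W := meet M K
  set D := meet M ((cyclicFlats M).filter (¬ · ⊆ Y))
  have hDW : D ⊆ W := hK.meet_filter_not_subset_subset hY hYK
  have hinter : (W ∩ ↑Y ∪ D) ∩ ↑Y = W ∩ ↑Y := by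
    rw [union_inter_distrib_right, inter_assoc, inter_self,
      union_eq_left.2 (inter_subset_inter_left _ hDW)]
  have hunion : W ∩ ↑Y ∪ D ∪ ↑Y = ↑Y ∪ D := by
    rw [union_right_comm, union_eq_right.2 inter_subset_right]
  have hsub := rk_inter_add_rk_union_le (M := M) (W ∩ ↑Y ∪ D) ↑Y
  rw [hinter, hunion] at hsub
  linarith [(Nat.cast_le (α := ℤ)).2 hsub]

lemma exists_isBasis_meet_of_insert (hH : FilterBetaIdentity M) (hK : IsCyclicFilter M K)
    (hY : CyclicFlat M ↑Y) (hYK : Y ∉ K)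
    (hup : ∀ Z : Finset α, CyclicFlat M ↑Z → Y ⊂ Z → Z ∈ K)
    {I : Set α} (hI : M.IsBasis I (meet M (insert Y K))) :
    ∃ J, M.IsBasis J (meet M K) ∧ I ⊆ J ∧
      J \ I ⊆ meet M ((cyclicFlats M).filter (¬ · ⊆ Y)) ∧ ((J \ I).ncard : ℤ) = beta M Y := by
  have hβ := hH.beta_eq_rk_sub_rk hK hY hYK hup
  have hrk := hH.rk_meet_le_rk_union hK hY hYK hup
  rw [meet_insert] at hI
  set W := meet M K
  set D := meet M ((cyclicFlats M).filter (¬ · ⊆ Y))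
  have hUW : W ∩ ↑Y ∪ D ⊆ W :=
    union_subset inter_subset_left (hK.meet_filter_not_subset_subset hY hYK)
  obtain ⟨J, hJ, hIJ⟩ := hI.indep.subset_isBasis_of_subset (hI.subset.trans subset_union_left)
    (hUW.trans meet_subset_ground)
  have hJW : M.IsBasis J W := by
    refine hJ.indep.isBasis_of_subset_of_subset_closure (hJ.subset.trans hUW)
      (subset_closure_of_rk_le (hJ.subset.trans hUW) meet_subset_ground ?_)
    rwa [rk_eq_ncard_of_indep hJ.indep, ← rk_eq_ncard_of_isBasis' hJ.isBasis']
  -- an element of `J \ I` lying in `W ∩ Y` would be spanned by `I ⊆ J`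
  have hJID : J \ I ⊆ D := by
    rintro x ⟨hxJ, hxI⟩
    refine (hJ.subset hxJ).resolve_left fun hxWY => hxI ?_
    rw [← hJ.indep.closure_inter_eq_self_of_subset hIJ]
    exact ⟨hI.subset_closure hxWY, hxJ⟩
  refine ⟨J, hJW, hIJ, hJID, ?_⟩
  have hcard := ncard_sdiff_add_ncard_of_subset hIJ hJ.indep.finite
  rw [hβ, rk_eq_ncard_of_isBasis' hJW.isBasis', rk_eq_ncard_of_isBasis' hI.isBasis', ← hcard]
  push_cast
  ring

lemma exists_isBasis_meet (hH : FilterBetaIdentity M) (hK : IsCyclicFilter M K) :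
    ∃ I, M.IsBasis I (meet M K) ∧ ∀ F ∈ cyclicFlats M,
      ∑ Z ∈ (cyclicFlats M \ K).filter (¬ F ⊆ ·), beta M Z ≤ ((I ∩ ↑F).ncard : ℤ) := by
  induction K using WellFoundedGT.induction with
  | _ K ih =>
    obtain hempty | ⟨Y, hYmax⟩ := (cyclicFlats M \ K).eq_empty_or_nonempty.imp_right
      Finset.exists_maximal
    · have hKZ : K = cyclicFlats M :=
        hK.subset_cyclicFlats.antisymm (Finset.sdiff_eq_empty_iff_subset.1 hempty)
      refine ⟨∅, M.empty_indep.isBasis_of_subset_of_subset_closure (empty_subset _) ?_, ?_⟩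
      · exact hKZ ▸ meet_cyclicFlats_subset_closure_empty
      · simp [hempty]
    obtain ⟨hYflat, hYK⟩ := Finset.mem_sdiff.1 hYmax.prop
    have hY := mem_cyclicFlats.1 hYflat
    have hup (Z : Finset α) (hZ : CyclicFlat M ↑Z) (hYZ : Y ⊂ Z) : Z ∈ K := by
      by_contra hZK
      exact hYZ.not_subset (hYmax.le_of_ge (Finset.mem_sdiff.2 ⟨mem_cyclicFlats.2 hZ, hZK⟩)
        hYZ.subset)
    obtain ⟨I, hI, hIF⟩ := ih _ (Finset.ssubset_insert hYK) (hK.insert hY hup)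
    obtain ⟨J, hJ, hIJ, hJID, hcard⟩ := hH.exists_isBasis_meet_of_insert hK hY hYK hup hI
    refine ⟨J, hJ, fun F hF => ?_⟩
    have hIJF : ((I ∩ ↑F).ncard : ℤ) ≤ (J ∩ ↑F).ncard :=
      Nat.cast_le.2 (ncard_le_ncard (inter_subset_inter_left _ hIJ) (toFinite _))
    rw [← Finset.insert_erase hYmax.prop, ← Finset.sdiff_insert, Finset.filter_insert]
    split_ifs with hFY
    · exact (hIF F hF).trans hIJF
    · have hJIF : J \ I ⊆ ↑F := hJID.trans (meet_subset_of_mem (Finset.mem_filter.2 ⟨hF, hFY⟩))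
      have hsplit := ncard_inter_add_ncard_sdiff_eq_ncard (J ∩ ↑F) I
        (hJ.indep.finite.subset inter_subset_left)
      rw [inter_right_comm, inter_eq_right.2 hIJ, inter_sdiff_right_comm,
        inter_eq_left.2 hJIF] at hsplit
      rw [Finset.sum_insert (by simp)]
      linarith [hIF F hF, (Nat.cast_inj (R := ℤ)).2 hsplit]

lemma sum_beta_filter_not_superset (hH : FilterBetaIdentity M) (hF : CyclicFlat M ↑F) :
    ∑ Z ∈ (cyclicFlats M).filter (¬ F ⊆ ·), beta M Z = rk M ↑F := by
  have hall := hH _ (isCyclicFilter_cyclicFlats M)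
  have hloops : rk M (meet M (cyclicFlats M)) = 0 := by
    simpa [rk_eq_ncard_of_indep M.empty_indep] using
      rk_le_of_subset_closure (M := M) meet_cyclicFlats_subset_closure_empty
  have hsplit := Finset.sum_filter_add_sum_filter_not (cyclicFlats M) (F ⊆ ·) (beta M)
  rw [sum_beta_filter_superset hF] at hsplit
  rw [hloops] at hall
  push_cast at hall
  linarith

lemma fundTransversal (hH : FilterBetaIdentity M) : FundTransversal M := by
  obtain ⟨B, hB, hBF⟩ := hH.exists_isBasis_meet (K := ∅) ⟨by simp, by simp⟩
  rw [meet_empty] at hB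
  refine ⟨B, isBasis_ground_iff.1 hB, fun F hF => ?_⟩
  obtain ⟨F, rfl⟩ := (toFinite F).exists_finset_coe
  have h := hBF F (mem_cyclicFlats.2 hF)
  rw [Finset.sdiff_empty, hH.sum_beta_filter_not_superset hF,
    ← rk_eq_ncard_of_indep (hB.indep.subset inter_subset_left), Nat.cast_le] at h
  exact subset_closure_of_rk_le inter_subset_right hF.1.subset_ground h

end FilterBetaIdentity

end Beta

section Forward

variable {M : Matroid α} {B F : Set α} {b : α}

lemma FundBasis.rk_eq_ncard [M.RankFinite] (hB : FundBasis M B) (hF : CyclicFlat M F) :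
    rk M F = (B ∩ F).ncard := by
  have hBF : M.Indep (B ∩ F) := hB.1.indep.subset inter_subset_left
  exact le_antisymm (rk_eq_ncard_of_indep hBF ▸ rk_le_of_subset_closure (hB.2 F hF))
    (ncard_le_rk_of_indep hBF inter_subset_right)

lemma FundBasis.subset_closure_sUnion_iff (hB : FundBasis M B) (hb : b ∈ B)
    (hF : CyclicFlat M F) : F ⊆ M.closure (⋃₀ {Z | CyclicFlat M Z ∧ b ∉ Z}) ↔ b ∉ F := by
  have hE : ⋃₀ {Z | CyclicFlat M Z ∧ b ∉ Z} ⊆ M.E :=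
    sUnion_subset fun _ hZ => hZ.1.1.subset_ground
  refine ⟨fun hFb hbF => ?_, fun hbF =>
    (subset_sUnion_of_mem (show F ∈ {Z | CyclicFlat M Z ∧ b ∉ Z} from ⟨hF, hbF⟩)).trans
    (M.subset_closure _ hE)⟩
  have hspan : M.closure (⋃₀ {Z | CyclicFlat M Z ∧ b ∉ Z}) ⊆ M.closure (B \ {b}) :=
    M.closure_subset_closure_of_subset_closure <| sUnion_subset fun Z hZ =>
      (hB.2 Z hZ.1).trans <| M.closure_subset_closure fun x hx =>
        ⟨hx.1, fun hxb => hZ.2 (hxb ▸ hx.2)⟩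
  exact hB.1.indep.notMem_closure_sdiff_of_mem hb (hspan (hFb hbF))

variable [Fintype α] {K : Finset (Finset α)} {Y : Finset α}

/-- For `b` in a fundamental basis, the largest cyclic flat not containing `b`. -/
noncomputable def cyclicFlatAvoiding (M : Matroid α) (b : α) : Finset α :=
  (toFinite (M.closure (⋃₀ {Z | CyclicFlat M Z ∧ b ∉ Z}))).toFinset

lemma coe_cyclicFlatAvoiding :
    (↑(cyclicFlatAvoiding M b) : Set α) = M.closure (⋃₀ {Z | CyclicFlat M Z ∧ b ∉ Z}) :=
  Finite.coe_toFinset _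

lemma cyclicFlat_cyclicFlatAvoiding (M : Matroid α) (b : α) :
    CyclicFlat M ↑(cyclicFlatAvoiding M b) :=
  coe_cyclicFlatAvoiding (α := α) ▸
    (Cyclic.sUnion fun (Z : Set α) (hZ : CyclicFlat M Z ∧ b ∉ Z) =>
      hZ.1.cyclic).cyclicFlat_closure (sUnion_subset fun _ hZ => hZ.1.1.subset_ground)

lemma FundBasis.subset_cyclicFlatAvoiding_iff (hB : FundBasis M B) (hb : b ∈ B)
    (hY : CyclicFlat M ↑Y) : Y ⊆ cyclicFlatAvoiding M b ↔ b ∉ Y := by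
  rw [← Finset.coe_subset, coe_cyclicFlatAvoiding, hB.subset_closure_sUnion_iff hb hY,
    Finset.mem_coe]

lemma FundBasis.rk_meet (hB : FundBasis M B) (hK : ∀ Y ∈ K, CyclicFlat M ↑Y) :
    rk M (meet M K) = (B ∩ meet M K).ncard := by
  induction K using Finset.induction_on with
  | empty =>
    rw [meet_empty, inter_eq_self_of_subset_left hB.1.subset_ground]
    exact rk_eq_ncard_of_isBasis' hB.1.isBasis_ground.isBasis'
  | insert Y K _ ih =>
    rw [meet_insert]
    exact rk_inter_eq_ncard_of_indep hB.1.indep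
      (ih fun Z hZ => hK Z (Finset.mem_insert_of_mem hZ))
      (hB.rk_eq_ncard (hK Y (Finset.mem_insert_self Y K)))

lemma FundBasis.card_filter_cyclicFlatAvoiding_mem {B : Finset α} (hB : FundBasis M ↑B)
    (hK : IsCyclicFilter M K) :
    ((B.filter (cyclicFlatAvoiding M · ∈ K)).card : ℤ) = rk M M.E - rk M (meet M K) := by
  have hfilter : B.filter (cyclicFlatAvoiding M · ∈ K) = B.filter (· ∉ meet M K) := by
    refine Finset.filter_congr fun b hb => ⟨fun h hbK => ?_, fun h => ?_⟩
    · exact (hB.subset_cyclicFlatAvoiding_iff hb (cyclicFlat_cyclicFlatAvoiding M b)).1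
        subset_rfl (meet_subset_of_mem h hbK)
    · obtain ⟨Y, hYK, hbY⟩ : ∃ Y ∈ K, b ∉ Y := by
        by_contra! hbK
        exact h ⟨hB.1.subset_ground hb, mem_iInter₂.2 hbK⟩
      exact hK.2 Y hYK _ (cyclicFlat_cyclicFlatAvoiding M b)
        ((hB.subset_cyclicFlatAvoiding_iff hb (hK.1 Y hYK)).2 hbY)
  have hmeet : ↑B ∩ meet M K = ↑(B.filter (· ∈ meet M K)) := by
    ext x; simp
  have hsplit := Finset.card_filter_add_card_filter_not (s := B) (· ∈ meet M K)
  rw [hfilter, hB.rk_meet hK.1, hmeet, ncard_coe_finset,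
    rk_eq_ncard_of_isBasis' hB.1.isBasis_ground.isBasis', ncard_coe_finset]
  omega

lemma FundBasis.beta_eq_card {B : Finset α} (hB : FundBasis M ↑B) (hY : CyclicFlat M ↑Y) :
    beta M Y = (B.filter (cyclicFlatAvoiding M · = Y)).card := by
  refine (eq_beta_of_sum_filter_superset
    (fun Y => ((B.filter (cyclicFlatAvoiding M · = Y)).card : ℤ)) (fun Y hY => ?_)
    (mem_cyclicFlats.2 hY)).symm
  rw [← Nat.cast_sum, Finset.sum_card_fiberwise_eq_card_filter,
    hB.card_filter_cyclicFlatAvoiding_mem (isCyclicFilter_superset M Y),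
    meet_filter_superset (mem_cyclicFlats.1 hY)]

lemma FundBasis.filterBetaIdentity {B : Finset α} (hB : FundBasis M ↑B) :
    FilterBetaIdentity M := fun K hK => by
  rw [Finset.sum_congr rfl fun Y hY => hB.beta_eq_card (hK.1 Y hY), ← Nat.cast_sum,
    Finset.sum_card_fiberwise_eq_card_filter, hB.card_filter_cyclicFlatAvoiding_mem hK]

end Forward

end MCoPaper

theorem stmt14 [Fintype α] (M : Matroid α) :
    FundTransversal M ↔
      ∀ F : Finset (Finset α), (∀ Y ∈ F, CyclicFlat M ↑Y) →
        (∀ A ∈ F, ∀ B : Finset α, CyclicFlat M ↑B → A ⊆ B → B ∈ F) →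
        ∑ Y ∈ F, beta M Y =
          (rk M M.E : ℤ) - rk M (M.E ∩ ⋂ Y ∈ F, (↑Y : Set α)) := by
  refine ⟨fun ⟨B, hB⟩ F h₁ h₂ => ?_,
    fun h => FilterBetaIdentity.fundTransversal fun K hK => h K hK.1 hK.2⟩
  obtain ⟨B, rfl⟩ := (toFinite B).exists_finset_coe
  exact hB.filterBetaIdentity F ⟨h₁, h₂⟩
end

section
/- For any finite matroid M, α(F) = 0 for every flat F of M that is not cyclic, where α(X) = η(X) − Σ_{flats F' ⊊ X} α(F') and η is the nullity function. -/
open Matroid Set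

variable {α : Type*}

/-! If the flat `F` is not cyclic, `M ↾ F` has a coloop `e`; then `F \ {e}` is again a flat, of the
same nullity, and `e` remains a coloop of every flat `F' ⊆ F` containing it, so by induction `α`
vanishes on the flats strictly between. Since the recursion defining `α` says exactly that
`∑_{flats F' ⊆ X} α(F') = η(X)` for every flat `X`, comparing this for `F` and `F \ {e}` leaves
`α(F) = η(F) - η(F \ {e}) = 0`. -/

lemma Matroid.IsColoop.restrict {M : Matroid α} {R : Set α} {e : α} (he : M.IsColoop e)
    (hR : R ⊆ M.E) (heR : e ∈ R) : (M ↾ R).IsColoop e :=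
  (restrict_isColoop_iff hR).2 ⟨fun h ↦ (he.mem_closure_iff_mem.1 h).2 rfl, heR⟩

lemma Matroid.IsFlat.sdiff_singleton_of_isColoop_restrict {M : Matroid α} {F : Set α} {e : α}
    (hF : M.IsFlat F) (he : (M ↾ F).IsColoop e) : M.IsFlat (F \ {e}) := by
  have heF := (restrict_isColoop_iff hF.subset_ground).1 he
  refine isFlat_iff_closure_eq.2 (subset_antisymm (fun x hx ↦ ⟨?_, ?_⟩)
    (M.subset_closure _ (sdiff_subset.trans hF.subset_ground)))
  · exact hF.closure ▸ M.closure_subset_closure sdiff_subset hx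
  · rintro rfl
    exact heF.1 hx

namespace MCoPaper

lemma coloop_iff_isColoop {M : Matroid α} {e : α} : Coloop M e ↔ M.IsColoop e :=
  isColoop_iff_forall_mem_isBase.symm

lemma cyclicFlat_iff_forall_not_isColoop {M : Matroid α} {F : Set α} :
    CyclicFlat M F ↔ M.IsFlat F ∧ ∀ e ∈ F, ¬ (M ↾ F).IsColoop e := by
  simp only [CyclicFlat, coloop_iff_isColoop]

lemma rk_eq_toNat_eRk (M : Matroid α) {X : Set α} (hX : X.Finite) :
    rk M X = (M.eRk X).toNat := by
  have hfin : M.eRk X ≠ ⊤ := eRk_ne_top_iff.2 (M.isRkFinite_of_finite hX)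
  obtain ⟨I, hI⟩ := M.exists_isBasis' X
  have hbound : ∀ n ∈ {n | ∃ J, M.Indep J ∧ J ⊆ X ∧ J.ncard = n}, n ≤ (M.eRk X).toNat := by
    rintro n ⟨J, hJ, hJX, rfl⟩
    exact ENat.toNat_le_toNat (hJ.encard_le_eRk_of_subset hJX) hfin
  refine le_antisymm (csSup_le ⟨0, ∅, M.empty_indep, empty_subset X, ncard_empty α⟩ hbound) ?_
  exact le_csSup ⟨_, hbound⟩ ⟨I, hI.indep, hI.subset, by rw [ncard_def, hI.encard_eq_eRk]⟩

lemma rk_insert_eq_add_one {M : Matroid α} {X : Set α} {e : α} (hX : X.Finite)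
    (he : e ∈ M.E \ M.closure X) : rk M (insert e X) = rk M X + 1 := by
  have hfin : M.eRk X ≠ ⊤ := eRk_ne_top_iff.2 (M.isRkFinite_of_finite hX)
  rw [rk_eq_toNat_eRk M (hX.insert e), rk_eq_toNat_eRk M hX, eRk_insert_eq_add_one he,
    ENat.toNat_add hfin ENat.one_ne_top, ENat.toNat_one]

lemma not_cyclicFlat_of_isColoop_restrict {M : Matroid α} {R Y : Set α} {e : α}
    (he : (M ↾ R).IsColoop e) (hYR : Y ⊆ R) (heY : e ∈ Y) : ¬ CyclicFlat M Y := fun hY ↦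
  (cyclicFlat_iff_forall_not_isColoop.1 hY).2 e heY <| by
    simpa [restrict_restrict_eq M hYR] using he.restrict (R := Y) hYR heY

noncomputable def nullity (M : Matroid α) (X : Finset α) : ℤ := X.card - rk M X

section Classical

-- Classical decidability, so that the filtered sums below are syntactically those in `alpha`.
open scoped Classical

lemma nullity_erase_of_isColoop {M : Matroid α} {X : Finset α} {e : α}
    (hX : ↑X ⊆ M.E) (he : (M ↾ ↑X).IsColoop e) : nullity M (X.erase e) = nullity M X := by
  obtain ⟨hecl, heX⟩ := (restrict_isColoop_iff hX).1 he
  rw [← Finset.coe_erase] at hecl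
  conv_rhs => rw [← Finset.insert_erase heX]
  rw [nullity, nullity, Finset.coe_insert,
    rk_insert_eq_add_one (X.erase e).finite_toSet ⟨hX heX, hecl⟩,
    Finset.card_insert_of_notMem (Finset.notMem_erase e X)]
  push_cast
  ring

lemma alpha_add_sum_alpha_ssubset [Fintype α] (M : Matroid α) (X : Finset α) :
    alpha M X + ∑ F ∈ Finset.univ.filter (fun F : Finset α ↦ M.IsFlat ↑F ∧ F ⊂ X), alpha M F =
      nullity M X := by
  rw [alpha, Finset.sum_attach _ (alpha M), nullity]
  ring

lemma sum_alpha_isFlat_subset [Fintype α] {M : Matroid α} {X : Finset α} (hX : M.IsFlat ↑X) :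
    ∑ F ∈ Finset.univ.filter (fun F : Finset α ↦ M.IsFlat ↑F ∧ F ⊆ X), alpha M F =
      nullity M X := by
  have hsplit : Finset.univ.filter (fun F : Finset α ↦ M.IsFlat ↑F ∧ F ⊆ X) =
      insert X (Finset.univ.filter (fun F : Finset α ↦ M.IsFlat ↑F ∧ F ⊂ X)) := by
    ext F
    simp only [Finset.mem_filter, Finset.mem_univ, true_and, Finset.mem_insert]
    constructor
    · rintro ⟨hF, hFX⟩
      exact hFX.eq_or_ssubset.imp id (⟨hF, ·⟩)
    · rintro (rfl | ⟨hF, hFX⟩)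
      · exact ⟨hX, subset_rfl⟩
      · exact ⟨hF, hFX.subset⟩
  rw [hsplit, Finset.sum_insert (by simp), alpha_add_sum_alpha_ssubset]

lemma sum_filter_subset_eq_add_sum_filter_subset_erase {β : Type*} [AddCommMonoid β]
    [Fintype α] (p : Finset α → Prop) (f : Finset α → β) {X : Finset α} {e : α} (hX : p X)
    (heX : e ∈ X) (hf : ∀ Y ⊂ X, p Y → e ∈ Y → f Y = 0) :
    ∑ Y ∈ Finset.univ.filter (fun Y ↦ p Y ∧ Y ⊆ X), f Y =
      f X + ∑ Y ∈ Finset.univ.filter (fun Y ↦ p Y ∧ Y ⊆ X.erase e), f Y := by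
  rw [← Finset.sum_filter_add_sum_filter_not _ (fun Y ↦ e ∈ Y), Finset.filter_filter,
    Finset.filter_filter]
  congr 1
  · refine Finset.sum_eq_single_of_mem X (by simp [hX, heX]) fun Y hY hYX ↦ ?_
    simp only [Finset.mem_filter, Finset.mem_univ, true_and] at hY
    exact hf Y (hY.1.2.ssubset_of_ne hYX) hY.1.1 hY.2
  · congr 1
    ext Y
    simp only [Finset.mem_filter, Finset.mem_univ, true_and, Finset.subset_erase, and_assoc]

end Classical

end MCoPaper

open MCoPaper

theorem stmt16 [Fintype α] (M : Matroid α) (F : Finset α) (hflat : M.IsFlat ↑F)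
    (hnc : ¬ CyclicFlat M ↑F) : alpha M F = 0 := by
  classical
  induction F using Finset.strongInduction with
  | H F ih =>
  obtain ⟨e, heF, he⟩ : ∃ e ∈ F, (M ↾ ↑F).IsColoop e := by
    simpa [cyclicFlat_iff_forall_not_isColoop, hflat] using hnc
  have hsplit := sum_filter_subset_eq_add_sum_filter_subset_erase (fun Y : Finset α ↦ M.IsFlat ↑Y)
    (alpha M) hflat heF fun Y hYF hY heY ↦
      ih Y hYF hY (not_cyclicFlat_of_isColoop_restrict he (Finset.coe_subset.2 hYF.subset) heY)
  have hG : M.IsFlat ↑(F.erase e) := by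
    rw [Finset.coe_erase]
    exact hflat.sdiff_singleton_of_isColoop_restrict he
  linarith [sum_alpha_isFlat_subset hflat, sum_alpha_isFlat_subset hG,
    nullity_erase_of_isColoop hflat.subset_ground he]
end
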